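/- Let K ⊆ ℝ^d be a compact set that is pointwise Whitney regular. If (f_n) and (df_n) are sequences of functions on K such that each df_n is a continuous derivative of f_n on K, f_n → f uniformly on K, and df_n → g uniformly on K, then g is a continuous derivative of f on K. Consequently, the jet space J¹(K) = {(f, df) : df is a continuous derivative of f on K}, with norm ‖(f,df)‖ = ‖f‖_K + ‖df‖_K, is a Banach space. -/

import Mathlib

/-
If `dh` is a derivative of `h` on `K` with `‖dh‖ ≤ M`, then `h` changes by at most `M · ℓ` along
a path in `K` of length `ℓ`: the arc-length function `v t = Var(γ, [0, t])` of a continuous path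
is continuous, and the derivative of `h` at `γ t` gives `|h (γ s) - h (γ t)| ≤ (M + ε) (v s - v t)`
for `s` slightly to the right of `t`, so continuous induction on `[0, 1]` applies. For `y` near
`x`, Whitney regularity provides such a path of length `≤ C |x - y|`; applied to `f n - f N` this
bounds the first-order remainder of `f n - f N` at `x` by `(C + 1) ‖df n - df N‖_K |y - x|`.
Letting `n → ∞`, the remainder of the limit differs from that of `f N` by an arbitrarily small
multiple of `|y - x|`, while the remainder of `f N` is `o(|y - x|)`.
-/

open Set Filter Topology MeasureTheory
open scoped NNReal ENNReal

noncomputable section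

/-- `df` is a (not necessarily unique) derivative of `f` on the set `K`:
at every `x ∈ K`, `(f y - f x - ⟪df x, y - x⟫)/‖y - x‖ → 0` as `y → x` within `K`. -/
def IsDerivOn {d : ℕ} (K : Set (EuclideanSpace ℝ (Fin d)))
    (f : EuclideanSpace ℝ (Fin d) → ℝ)
    (df : EuclideanSpace ℝ (Fin d) → EuclideanSpace ℝ (Fin d)) : Prop :=
  ∀ x ∈ K, Filter.Tendsto
    (fun y => (f y - f x - (inner ℝ (df x) (y - x) : ℝ)) / ‖y - x‖)
    (𝓝[K \ {x}] x) (𝓝 0)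

/-- `x` and `y` are joined by a rectifiable path inside `S` of length at most `L`. -/
def RectJoin {d : ℕ} (S : Set (EuclideanSpace ℝ (Fin d)))
    (x y : EuclideanSpace ℝ (Fin d)) (L : ℝ) : Prop :=
  ∃ γ : ℝ → EuclideanSpace ℝ (Fin d), ContinuousOn γ (Icc 0 1) ∧
    MapsTo γ (Icc 0 1) S ∧ γ 0 = x ∧ γ 1 = y ∧
    eVariationOn γ (Icc 0 1) ≤ ENNReal.ofReal L

/-- Pointwise Whitney regularity of a set. -/
def PointwiseWhitneyRegular {d : ℕ} (S : Set (EuclideanSpace ℝ (Fin d))) : Prop :=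
  ∀ x ∈ S, ∃ C > (0:ℝ), ∃ V ∈ 𝓝 x, ∀ y ∈ V ∩ S, RectJoin S x y (C * ‖x - y‖)

open Asymptotics

theorem dist_le_variationOnFromTo_sub {α E : Type*} [LinearOrder α] [PseudoMetricSpace E]
    {f : α → E} {s : Set α} (hf : LocallyBoundedVariationOn f s) {a b c : α}
    (ha : a ∈ s) (hb : b ∈ s) (hc : c ∈ s) (hbc : b ≤ c) :
    dist (f b) (f c) ≤ variationOnFromTo f s a c - variationOnFromTo f s a b := calc
  _ ≤ variationOnFromTo f s b c := by
    rw [variationOnFromTo.eq_of_le f s hbc, dist_edist]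
    exact ENNReal.toReal_mono (hf b c hb hc)
      (eVariationOn.edist_le f ⟨hb, le_rfl, hbc⟩ ⟨hc, hbc, le_rfl⟩)
  _ = _ := by rw [← variationOnFromTo.add hf ha hb hc, add_sub_cancel_left]

theorem continuousOn_variationOnFromTo {α E : Type*} [LinearOrder α] [TopologicalSpace α]
    [OrderTopology α] [PseudoMetricSpace E] {f : α → E} {s : Set α}
    (hf : LocallyBoundedVariationOn f s) (hfc : ContinuousOn f s) {a : α} (ha : a ∈ s) :
    ContinuousOn (variationOnFromTo f s a) s := by
  intro b hb
  have hleft := variationOnFromTo.tendsto_left ha hb hf ((hfc b hb).mono inter_subset_left)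
  have hright := variationOnFromTo.tendsto_right ha hb hf ((hfc b hb).mono inter_subset_left)
  rw [dist_self, sub_zero] at hleft
  rw [dist_self, add_zero] at hright
  have hsplit : s \ {b} = s ∩ Iio b ∪ s ∩ Ioi b := by
    rw [← inter_union_distrib_left, Iio_union_Ioi, sdiff_eq, compl_singleton_eq]
  rw [← continuousWithinAt_sdiff_self, ContinuousWithinAt, hsplit, nhdsWithin_union]
  exact hleft.sup hright

theorem dist_le_sub_of_eventually_dist_le_sub {E : Type*} [PseudoMetricSpace E] {g : ℝ → E}
    {v : ℝ → ℝ} {a b : ℝ} (hg : ContinuousOn g (Icc a b)) (hv : ContinuousOn v (Icc a b))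
    (hstep : ∀ t ∈ Ico a b, ∀ᶠ s in 𝓝[>] t, dist (g t) (g s) ≤ v s - v t) :
    ∀ ⦃t⦄, t ∈ Icc a b → dist (g a) (g t) ≤ v t - v a := by
  set S := {t | dist (g a) (g t) ≤ v t - v a}
  have hclosed : IsClosed (S ∩ Icc a b) := by
    have : ContinuousOn (fun t => (dist (g a) (g t), v t - v a)) (Icc a b) :=
      (continuous_dist.comp_continuousOn (continuousOn_const.prodMk hg)).prodMk
        (hv.sub continuousOn_const)
    rw [inter_comm]
    exact this.preimage_isClosed_of_isClosed isClosed_Icc OrderClosedTopology.isClosed_le'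
  refine hclosed.Icc_subset_of_forall_mem_nhdsWithin (by simp [S]) fun t ⟨htS, ht⟩ => ?_
  filter_upwards [hstep t ht] with s hs
  calc dist (g a) (g s) ≤ dist (g a) (g t) + dist (g t) (g s) := dist_triangle _ _ _
    _ ≤ v s - v a := by linarith [show dist (g a) (g t) ≤ v t - v a from htS]

section IsDerivOn

variable {d : ℕ} {K : Set (EuclideanSpace ℝ (Fin d))}
  {f : EuclideanSpace ℝ (Fin d) → ℝ} {df : EuclideanSpace ℝ (Fin d) → EuclideanSpace ℝ (Fin d)}
  {x y : EuclideanSpace ℝ (Fin d)}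

def taylorRemainder (f : EuclideanSpace ℝ (Fin d) → ℝ)
    (df : EuclideanSpace ℝ (Fin d) → EuclideanSpace ℝ (Fin d)) (x y : EuclideanSpace ℝ (Fin d)) :
    ℝ :=
  f y - f x - inner ℝ (df x) (y - x)

theorem taylorRemainder_sub (f₂ : EuclideanSpace ℝ (Fin d) → ℝ)
    (df₂ : EuclideanSpace ℝ (Fin d) → EuclideanSpace ℝ (Fin d)) :
    taylorRemainder (f - f₂) (df - df₂) x y =
      taylorRemainder f df x y - taylorRemainder f₂ df₂ x y := by
  simp only [taylorRemainder, Pi.sub_apply, inner_sub_left]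
  ring

theorem isDerivOn_iff_isLittleO :
    IsDerivOn K f df ↔ ∀ x ∈ K, taylorRemainder f df x =o[𝓝[K] x] (· - x) := by
  refine forall₂_congr fun x hx => ?_
  rw [← isLittleO_iff_tendsto', isLittleO_norm_right, ← isLittleO_insert (by simp),
    insert_sdiff_singleton, insert_eq_of_mem hx]
  · rfl
  filter_upwards with y hy
  rw [norm_eq_zero, sub_eq_zero] at hy
  simp [hy]

theorem abs_sub_le_abs_taylorRemainder_add :
    |f y - f x| ≤ |taylorRemainder f df x y| + ‖df x‖ * ‖y - x‖ := by
  have := abs_sub_abs_le_abs_sub (f y - f x) (inner ℝ (df x) (y - x))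
  have := abs_real_inner_le_norm (df x) (y - x)
  rw [taylorRemainder]
  linarith

theorem IsDerivOn.eventually_abs_sub_le (h : IsDerivOn K f df) (hx : x ∈ K) {ε : ℝ}
    (hε : 0 < ε) : ∀ᶠ y in 𝓝[K] x, |f y - f x| ≤ (‖df x‖ + ε) * ‖y - x‖ := by
  filter_upwards [(isDerivOn_iff_isLittleO.1 h x hx).bound hε] with y hy
  rw [Real.norm_eq_abs] at hy
  linarith [abs_sub_le_abs_taylorRemainder_add (f := f) (df := df) (x := x) (y := y)]

theorem IsDerivOn.continuousOn (h : IsDerivOn K f df) : ContinuousOn f K := by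
  intro x hx
  have hlim : Tendsto (fun y => (‖df x‖ + 1) * ‖y - x‖) (𝓝[K] x) (𝓝 0) := by
    have : Continuous fun y => (‖df x‖ + 1) * ‖y - x‖ := by fun_prop
    simpa using (this.tendsto x).mono_left nhdsWithin_le_nhds
  rw [ContinuousWithinAt, tendsto_iff_norm_sub_tendsto_zero]
  simp only [Real.norm_eq_abs]
  exact squeeze_zero' (Eventually.of_forall fun _ => abs_nonneg _)
    (h.eventually_abs_sub_le hx one_pos) hlim

theorem IsDerivOn.sub {f₂ : EuclideanSpace ℝ (Fin d) → ℝ}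
    {df₂ : EuclideanSpace ℝ (Fin d) → EuclideanSpace ℝ (Fin d)}
    (h : IsDerivOn K f df) (h₂ : IsDerivOn K f₂ df₂) : IsDerivOn K (f - f₂) (df - df₂) := by
  rw [isDerivOn_iff_isLittleO] at *
  intro x hx
  exact ((h x hx).sub (h₂ x hx)).congr_left fun y => (taylorRemainder_sub f₂ df₂).symm

theorem IsDerivOn.eventually_dist_comp_le {M : ℝ} (h : IsDerivOn K f df)
    (hM : ∀ p ∈ K, ‖df p‖ ≤ M) {γ : ℝ → EuclideanSpace ℝ (Fin d)} {a b : ℝ}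
    (hγc : ContinuousOn γ (Icc a b)) (hγK : MapsTo γ (Icc a b) K)
    (hbv : LocallyBoundedVariationOn γ (Icc a b)) {ε : ℝ} (hε : 0 < ε) {t : ℝ}
    (ht : t ∈ Ico a b) :
    ∀ᶠ s in 𝓝[>] t, dist (f (γ t)) (f (γ s)) ≤
      (M + ε) * variationOnFromTo γ (Icc a b) a s -
        (M + ε) * variationOnFromTo γ (Icc a b) a t := by
  have ha : a ∈ Icc a b := left_mem_Icc.2 (ht.1.trans ht.2.le)
  have ht' : t ∈ Icc a b := Ico_subset_Icc_self ht
  have hγt : Tendsto γ (𝓝[>] t) (𝓝[K] (γ t)) :=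
    ((hγc t ht').tendsto_nhdsWithin hγK).mono_left (nhdsWithin_le_of_mem (Icc_mem_nhdsGT_of_mem ht))
  filter_upwards [hγt.eventually (h.eventually_abs_sub_le (hγK ht') hε),
    Icc_mem_nhdsGT_of_mem ht, self_mem_nhdsWithin] with s hs hsab hts
  calc dist (f (γ t)) (f (γ s)) = |f (γ s) - f (γ t)| := by rw [Real.dist_eq, abs_sub_comm]
    _ ≤ (‖df (γ t)‖ + ε) * ‖γ s - γ t‖ := hs
    _ ≤ (M + ε) * (variationOnFromTo γ (Icc a b) a s - variationOnFromTo γ (Icc a b) a t) := by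
      have hMt := hM _ (hγK ht')
      have hγst : ‖γ s - γ t‖ ≤
          variationOnFromTo γ (Icc a b) a s - variationOnFromTo γ (Icc a b) a t := by
        rw [← dist_eq_norm, dist_comm]
        exact dist_le_variationOnFromTo_sub hbv ha ht' hsab (le_of_lt hts)
      exact mul_le_mul (by linarith) hγst (norm_nonneg _) (by linarith [norm_nonneg (df (γ t))])
    _ = _ := mul_sub _ _ _

theorem IsDerivOn.abs_sub_le_of_rectJoin {M : ℝ} (h : IsDerivOn K f df)
    (hM : ∀ p ∈ K, ‖df p‖ ≤ M) {L : ℝ} (hL : 0 ≤ L) (hxy : RectJoin K x y L) :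
    |f y - f x| ≤ M * L := by
  obtain ⟨γ, hγc, hγK, rfl, rfl, hvar⟩ := hxy
  have hbv : LocallyBoundedVariationOn γ (Icc 0 1) :=
    BoundedVariationOn.locallyBoundedVariationOn (ne_top_of_le_ne_top ENNReal.ofReal_ne_top hvar)
  have h0 : (0 : ℝ) ∈ Icc (0 : ℝ) 1 := left_mem_Icc.2 zero_le_one
  have h1 : (1 : ℝ) ∈ Icc (0 : ℝ) 1 := right_mem_Icc.2 zero_le_one
  set v := variationOnFromTo γ (Icc (0 : ℝ) 1) 0
  have hv1 : v 1 ≤ L := by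
    rw [show v 1 = _ from variationOnFromTo.eq_of_le _ _ zero_le_one, inter_self]
    exact ENNReal.toReal_le_of_le_ofReal hL hvar
  have hM0 : 0 ≤ M := (norm_nonneg _).trans (hM _ (hγK h0))
  have hbound : ∀ ε > 0, |f (γ 1) - f (γ 0)| ≤ (M + ε) * v 1 := by
    intro ε hε
    have := dist_le_sub_of_eventually_dist_le_sub (h.continuousOn.comp hγc hγK)
      ((continuousOn_variationOnFromTo hbv hγc h0).const_smul (M + ε))
      (fun t ht => h.eventually_dist_comp_le hM hγc hγK hbv hε ht) h1
    simpa [v, variationOnFromTo.self, Real.dist_eq, abs_sub_comm] using this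
  have hlim : Tendsto (fun ε => (M + ε) * v 1) (𝓝[>] 0) (𝓝 (M * v 1)) := by
    simpa using ((tendsto_const_nhds.add tendsto_id).mul_const (v 1)).mono_left
      (nhdsWithin_le_nhds (a := (0 : ℝ)))
  calc |f (γ 1) - f (γ 0)| ≤ M * v 1 := ge_of_tendsto hlim (eventually_nhdsWithin_of_forall hbound)
    _ ≤ M * L := by gcongr

theorem IsDerivOn.abs_taylorRemainder_le_of_rectJoin (h : IsDerivOn K f df) {M : ℝ}
    (hM : ∀ p ∈ K, ‖df p‖ ≤ M) (hx : x ∈ K) {L : ℝ} (hL : 0 ≤ L) (hxy : RectJoin K x y L) :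
    |taylorRemainder f df x y| ≤ M * (L + ‖y - x‖) := calc
  _ ≤ |f y - f x| + |inner ℝ (df x) (y - x)| := abs_sub _ _
  _ ≤ M * L + M * ‖y - x‖ := by
    gcongr
    · exact h.abs_sub_le_of_rectJoin hM hL hxy
    · exact (abs_real_inner_le_norm _ _).trans (by gcongr; exact hM x hx)
  _ = M * (L + ‖y - x‖) := (mul_add _ _ _).symm

theorem abs_taylorRemainder_le_of_tendsto {f : ℕ → EuclideanSpace ℝ (Fin d) → ℝ}
    {df : ℕ → EuclideanSpace ℝ (Fin d) → EuclideanSpace ℝ (Fin d)}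
    {flim : EuclideanSpace ℝ (Fin d) → ℝ}
    {glim : EuclideanSpace ℝ (Fin d) → EuclideanSpace ℝ (Fin d)}
    (hder : ∀ n, IsDerivOn K (f n) (df n)) (hfx : Tendsto (f · x) atTop (𝓝 (flim x)))
    (hfy : Tendsto (f · y) atTop (𝓝 (flim y))) (hdfx : Tendsto (df · x) atTop (𝓝 (glim x)))
    (hx : x ∈ K) {L : ℝ} (hL : 0 ≤ L) (hxy : RectJoin K x y L) {N : ℕ} {δ : ℝ}
    (hN : ∀ n ≥ N, ∀ p ∈ K, ‖df n p - df N p‖ ≤ δ) :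
    |taylorRemainder flim glim x y| ≤ |taylorRemainder (f N) (df N) x y| + δ * (L + ‖y - x‖) := by
  have hlim : Tendsto (fun n => taylorRemainder (f n) (df n) x y) atTop
      (𝓝 (taylorRemainder flim glim x y)) :=
    (hfy.sub hfx).sub (hdfx.inner tendsto_const_nhds)
  refine le_of_tendsto hlim.abs (eventually_atTop.2 ⟨N, fun n hn => ?_⟩)
  have hdiff := ((hder n).sub (hder N)).abs_taylorRemainder_le_of_rectJoin (hN n hn) hx hL hxy
  rw [taylorRemainder_sub] at hdiff
  linarith [abs_sub_abs_le_abs_sub (taylorRemainder (f n) (df n) x y)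
    (taylorRemainder (f N) (df N) x y)]

theorem PointwiseWhitneyRegular.isDerivOn_of_tendstoUniformlyOn
    (hreg : PointwiseWhitneyRegular K) {f : ℕ → EuclideanSpace ℝ (Fin d) → ℝ}
    {df : ℕ → EuclideanSpace ℝ (Fin d) → EuclideanSpace ℝ (Fin d)}
    {flim : EuclideanSpace ℝ (Fin d) → ℝ}
    {glim : EuclideanSpace ℝ (Fin d) → EuclideanSpace ℝ (Fin d)}
    (hder : ∀ n, IsDerivOn K (f n) (df n)) (hf : ∀ y ∈ K, Tendsto (f · y) atTop (𝓝 (flim y)))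
    (hdf : TendstoUniformlyOn df glim atTop K) : IsDerivOn K flim glim := by
  refine isDerivOn_iff_isLittleO.2 fun x hx => IsLittleO.of_bound fun ε hε => ?_
  obtain ⟨C, hC, V, hV, hjoin⟩ := hreg x hx
  set δ := ε / (2 * (C + 1))
  obtain ⟨N, hN⟩ : ∃ N, ∀ n ≥ N, ∀ p ∈ K, ‖df n p - df N p‖ ≤ δ := by
    obtain ⟨N, hN⟩ := Metric.uniformCauchySeqOn_iff.1 hdf.uniformCauchySeqOn δ (by positivity)
    exact ⟨N, fun n hn p hp => (dist_eq_norm _ _).symm.trans_le (hN n hn N le_rfl p hp).le⟩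
  filter_upwards [(isDerivOn_iff_isLittleO.1 (hder N) x hx).bound (half_pos hε),
    mem_nhdsWithin_of_mem_nhds hV, self_mem_nhdsWithin] with y hyN hyV hyK
  rw [Real.norm_eq_abs] at hyN ⊢
  calc _ ≤ |taylorRemainder (f N) (df N) x y| + δ * (C * ‖x - y‖ + ‖y - x‖) :=
        abs_taylorRemainder_le_of_tendsto hder (hf x hx) (hf y hyK) (hdf.tendsto_at hx) hx
          (by positivity) (hjoin y ⟨hyV, hyK⟩) hN
    _ ≤ ε / 2 * ‖y - x‖ + δ * (C * ‖y - x‖ + ‖y - x‖) := by rw [norm_sub_rev x y]; gcongr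
    _ = ε * ‖y - x‖ := by simp only [δ]; field_simp; ring

end IsDerivOn

theorem jet_space_complete_of_pointwiseWhitneyRegular_general {d : ℕ}
    (K : Set (EuclideanSpace ℝ (Fin d)))
    (hreg : PointwiseWhitneyRegular K)
    (f : ℕ → EuclideanSpace ℝ (Fin d) → ℝ)
    (df : ℕ → EuclideanSpace ℝ (Fin d) → EuclideanSpace ℝ (Fin d))
    (hder : ∀ n, ContinuousOn (df n) K ∧ IsDerivOn K (f n) (df n))
    (flim : EuclideanSpace ℝ (Fin d) → ℝ)
    (glim : EuclideanSpace ℝ (Fin d) → EuclideanSpace ℝ (Fin d))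
    (hfu : TendstoUniformlyOn f flim Filter.atTop K)
    (hgu : TendstoUniformlyOn df glim Filter.atTop K) :
    ContinuousOn glim K ∧ IsDerivOn K flim glim :=
  ⟨hgu.continuousOn (.of_forall fun n => (hder n).1),
    hreg.isDerivOn_of_tendstoUniformlyOn (fun n => (hder n).2) (fun _ hy => hfu.tendsto_at hy) hgu⟩

/-- If `K` is a pointwise Whitney regular compact set, then the jet space `J¹(K)` is
complete: if `df n` is a continuous derivative of `f n` on `K` for each `n`,
`f n → f` uniformly on `K` and `df n → g` uniformly on `K`, then `g` is a continuous
derivative of `f` on `K`. -/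
theorem jet_space_complete_of_pointwiseWhitneyRegular {d : ℕ}
    (K : Set (EuclideanSpace ℝ (Fin d))) (hK : IsCompact K)
    (hreg : PointwiseWhitneyRegular K)
    (f : ℕ → EuclideanSpace ℝ (Fin d) → ℝ)
    (df : ℕ → EuclideanSpace ℝ (Fin d) → EuclideanSpace ℝ (Fin d))
    (hder : ∀ n, ContinuousOn (df n) K ∧ IsDerivOn K (f n) (df n))
    (flim : EuclideanSpace ℝ (Fin d) → ℝ)
    (glim : EuclideanSpace ℝ (Fin d) → EuclideanSpace ℝ (Fin d))
    (hfu : TendstoUniformlyOn f flim Filter.atTop K)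
    (hgu : TendstoUniformlyOn df glim Filter.atTop K) :
    ContinuousOn glim K ∧ IsDerivOn K flim glim :=
  jet_space_complete_of_pointwiseWhitneyRegular_general K hreg f df hder flim glim hfu hgu
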